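/- arXiv:1901.03348 — 3 statements merged into one kernel-verified Lean document; each statement's English description precedes it below -/
import Mathlib

section
/- Let Y_1, ..., Y_k be complex-valued random variables with E|Y_m|^2 < ∞ for each m, forming a 1-dependent sequence. Define the cumulant-type functionals Ê recursively by Ê(Y_1) = E Y_1 and Ê(Y_1,...,Y_k) = E(Y_1⋯Y_k) − Σ_{j=1}^{k-1} Ê(Y_1,...,Y_j) E(Y_{j+1}⋯Y_k). Then |Ê(Y_1,...,Y_k)| ≤ 2^{k-1} ∏_{m=1}^k (E|Y_m|^2)^{1/2}. -/
open MeasureTheory Finset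

/-- Heinrich's mixed cumulant functional Ê: `heinrichE μ Y k` corresponds to
`Ê(Y 0, Y 1, ..., Y k)` (so `k+1` variables). -/
noncomputable def heinrichE {Ω : Type*} [MeasurableSpace Ω] (μ : Measure Ω)
    (Y : ℕ → Ω → ℂ) : ℕ → ℂ
  | k =>
    (∫ ω, ∏ m ∈ Finset.range (k + 1), Y m ω ∂μ) -
      ∑ j ∈ (Finset.range k).attach,
        heinrichE μ Y j.1 * ∫ ω, ∏ m ∈ Finset.Icc (j.1 + 1) k, Y m ω ∂μ
  termination_by k => k
  decreasing_by exact Finset.mem_range.mp j.2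

/-- The sequence `Y` is 1-dependent: for `s + 1 < t`, the σ-algebra generated by
`Y 0, ..., Y s` is independent of the one generated by `Y t, Y (t+1), ...`. -/
def OneDependent {Ω : Type*} [MeasurableSpace Ω] (μ : Measure Ω) (Y : ℕ → Ω → ℂ) : Prop :=
  ∀ s t : ℕ, s + 1 < t →
    ProbabilityTheory.Indep
      (⨆ i ∈ Finset.range (s + 1), MeasurableSpace.comap (Y i) inferInstance)
      (⨆ i : ℕ, MeasurableSpace.comap (Y (t + i)) inferInstance) μ


/-! The second moment of a product over indices no two of which are adjacent factorizes by
1-dependence. Splitting an arbitrary index set into its even and odd elements and applying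
Cauchy–Schwarz therefore gives `‖E ∏_{m ∈ s} Y_m‖ ≤ ∏_{m ∈ s} ‖Y_m‖₂` for every `s`. Feeding
this into the recursion for `Ê` and inducting, the factor `2 ^ k` comes from
`1 + ∑_{j < k} 2 ^ j = 2 ^ k`. -/

open ProbabilityTheory

def Spaced (s : Finset ℕ) : Prop := ∀ i ∈ s, ∀ j ∈ s, i < j → i + 1 < j

lemma spaced_filter_mod_two_eq_zero (s : Finset ℕ) : Spaced (s.filter (· % 2 = 0)) := by
  intro i hi j hj hij
  simp only [Finset.mem_filter] at hi hj
  omega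

lemma spaced_filter_mod_two_ne_zero (s : Finset ℕ) : Spaced (s.filter (¬ · % 2 = 0)) := by
  intro i hi j hj hij
  simp only [Finset.mem_filter] at hi hj
  omega

section SigmaAlgebras

variable {Ω β : Type*} [MeasurableSpace β] {Y : ℕ → Ω → β}

lemma measurable_biSup_comap_range {s i : ℕ} (hi : i ≤ s) :
    Measurable[⨆ j ∈ range (s + 1), MeasurableSpace.comap (Y j) inferInstance] (Y i) :=
  Measurable.of_comap_le <| le_iSup₂ (f := fun j (_ : j ∈ range (s + 1)) =>
    MeasurableSpace.comap (Y j) inferInstance) i (mem_range.mpr (by omega))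

lemma measurable_iSup_comap_add {t m : ℕ} (hm : t ≤ m) :
    Measurable[⨆ j, MeasurableSpace.comap (Y (t + j)) inferInstance] (Y m) := by
  obtain ⟨j, rfl⟩ := Nat.exists_eq_add_of_le hm
  exact Measurable.of_comap_le <|
    le_iSup (fun j => MeasurableSpace.comap (Y (t + j)) inferInstance) j

end SigmaAlgebras

lemma integral_mul_le_sqrt_integral_sq_mul {α : Type*} [MeasurableSpace α] {ν : Measure α}
    {f g : α → ℝ} (hf_nonneg : 0 ≤ᵐ[ν] f) (hg_nonneg : 0 ≤ᵐ[ν] g) (hf : MemLp f 2 ν)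
    (hg : MemLp g 2 ν) :
    ∫ a, f a * g a ∂ν ≤ √(∫ a, f a ^ 2 ∂ν) * √(∫ a, g a ^ 2 ∂ν) := by
  have h := integral_mul_le_Lp_mul_Lq_of_nonneg Real.HolderConjugate.two_two hf_nonneg hg_nonneg
    (by simpa using hf) (by simpa using hg)
  simpa only [Real.rpow_two, ← Real.sqrt_eq_rpow] using h

namespace OneDependent

variable {Ω : Type*} [MeasurableSpace Ω] {μ : Measure Ω} [IsProbabilityMeasure μ] {Y : ℕ → Ω → ℂ}

theorem integrable_and_integral_prod_of_spaced (hdep : OneDependent μ Y) {f : ℕ → ℂ → ℝ}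
    (hf : ∀ m, Measurable (f m)) (hint : ∀ m, Integrable (fun ω => f m (Y m ω)) μ)
    {s : Finset ℕ} (hs : Spaced s) :
    Integrable (fun ω => ∏ m ∈ s, f m (Y m ω)) μ ∧
      ∫ ω, ∏ m ∈ s, f m (Y m ω) ∂μ = ∏ m ∈ s, ∫ ω, f m (Y m ω) ∂μ := by
  induction s using Finset.induction_on_min with
  | empty => simp
  | insert a s hlt ih =>
    have hgap : ∀ x ∈ s, a + 1 < x := fun x hx =>
      hs a (mem_insert_self a s) x (mem_insert_of_mem hx) (hlt x hx)
    obtain ⟨hint_s, heq_s⟩ :=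
      ih fun i hi j hj => hs i (mem_insert_of_mem hi) j (mem_insert_of_mem hj)
    have hindep : IndepFun (fun ω => f a (Y a ω)) (fun ω => ∏ m ∈ s, f m (Y m ω)) μ := by
      rw [IndepFun_iff_Indep]
      refine indep_of_indep_of_le_right (indep_of_indep_of_le_left (hdep a (a + 2) (by omega))
        ((hf a).comp (measurable_biSup_comap_range le_rfl)).comap_le) ?_
      refine Measurable.comap_le (Finset.measurable_prod _ fun m hm => ?_)
      exact (hf m).comp (measurable_iSup_comap_add (hgap m hm))
    have hnot : a ∉ s := fun ha => lt_irrefl a (hlt a ha)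
    simp only [prod_insert hnot]
    refine ⟨hindep.integrable_mul (hint a) hint_s, ?_⟩
    rw [← heq_s]
    exact hindep.integral_mul_eq_mul_integral (hint a).1 hint_s.1

theorem memLp_and_integral_sq_prod_norm_of_spaced (hdep : OneDependent μ Y)
    (hL2 : ∀ m, MemLp (Y m) 2 μ) {s : Finset ℕ} (hs : Spaced s) :
    MemLp (fun ω => ∏ m ∈ s, ‖Y m ω‖) 2 μ ∧
      ∫ ω, (∏ m ∈ s, ‖Y m ω‖) ^ 2 ∂μ = ∏ m ∈ s, ∫ ω, ‖Y m ω‖ ^ 2 ∂μ := by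
  obtain ⟨hint, heq⟩ := hdep.integrable_and_integral_prod_of_spaced (f := fun _ z => ‖z‖ ^ 2)
    (fun _ => by fun_prop) (fun m => (hL2 m).norm.integrable_sq) hs
  have hmeas : AEStronglyMeasurable (fun ω => ∏ m ∈ s, ‖Y m ω‖) μ :=
    Finset.aestronglyMeasurable_fun_prod _ fun m _ => (hL2 m).1.norm
  simp only [prod_pow] at hint heq
  exact ⟨(memLp_two_iff_integrable_sq hmeas).2 hint, heq⟩

theorem norm_integral_prod_le (hdep : OneDependent μ Y)
    (hL2 : ∀ m, MemLp (Y m) 2 μ) (s : Finset ℕ) :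
    ‖∫ ω, ∏ m ∈ s, Y m ω ∂μ‖ ≤ ∏ m ∈ s, √(∫ ω, ‖Y m ω‖ ^ 2 ∂μ) := by
  set se := s.filter (· % 2 = 0)
  set so := s.filter (¬ · % 2 = 0)
  obtain ⟨hLe, hsqe⟩ :=
    hdep.memLp_and_integral_sq_prod_norm_of_spaced hL2 (spaced_filter_mod_two_eq_zero s)
  obtain ⟨hLo, hsqo⟩ :=
    hdep.memLp_and_integral_sq_prod_norm_of_spaced hL2 (spaced_filter_mod_two_ne_zero s)
  have hnonneg (t : Finset ℕ) : 0 ≤ᵐ[μ] fun ω => ∏ m ∈ t, ‖Y m ω‖ :=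
    .of_forall fun ω => by positivity
  have hsq_nonneg (m : ℕ) : 0 ≤ ∫ ω, ‖Y m ω‖ ^ 2 ∂μ := integral_nonneg fun ω => by positivity
  calc ‖∫ ω, ∏ m ∈ s, Y m ω ∂μ‖
      ≤ ∫ ω, ∏ m ∈ s, ‖Y m ω‖ ∂μ := by
        simpa only [norm_prod] using norm_integral_le_integral_norm fun ω => ∏ m ∈ s, Y m ω
    _ = ∫ ω, (∏ m ∈ se, ‖Y m ω‖) * ∏ m ∈ so, ‖Y m ω‖ ∂μ := by
        simp only [se, so, prod_filter_mul_prod_filter_not]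
    _ ≤ √(∫ ω, (∏ m ∈ se, ‖Y m ω‖) ^ 2 ∂μ) * √(∫ ω, (∏ m ∈ so, ‖Y m ω‖) ^ 2 ∂μ) :=
        integral_mul_le_sqrt_integral_sq_mul (hnonneg se) (hnonneg so) hLe hLo
    _ = ∏ m ∈ s, √(∫ ω, ‖Y m ω‖ ^ 2 ∂μ) := by
        rw [hsqe, hsqo, Real.sqrt_prod _ fun m _ => hsq_nonneg m,
          Real.sqrt_prod _ fun m _ => hsq_nonneg m, prod_filter_mul_prod_filter_not]

theorem norm_heinrichE_le (hdep : OneDependent μ Y) (hL2 : ∀ m, MemLp (Y m) 2 μ)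
    (k : ℕ) :
    ‖heinrichE μ Y k‖ ≤ 2 ^ k * ∏ m ∈ range (k + 1), √(∫ ω, ‖Y m ω‖ ^ 2 ∂μ) := by
  induction k using Nat.strong_induction_on with
  | _ k ih =>
  set σ : ℕ → ℝ := fun m => √(∫ ω, ‖Y m ω‖ ^ 2 ∂μ)
  set P := ∏ m ∈ range (k + 1), σ m
  have hterm (j : ℕ) (hj : j < k) :
      ‖heinrichE μ Y j * ∫ ω, ∏ m ∈ Icc (j + 1) k, Y m ω ∂μ‖ ≤ 2 ^ j * P := by
    have hsplit : (∏ m ∈ range (j + 1), σ m) * ∏ m ∈ Icc (j + 1) k, σ m = P := by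
      rw [← Finset.Ico_add_one_right_eq_Icc, prod_range_mul_prod_Ico _ (by omega)]
    rw [norm_mul, ← hsplit, ← mul_assoc]
    exact mul_le_mul (ih j hj) (hdep.norm_integral_prod_le hL2 _) (norm_nonneg _)
      (by positivity)
  rw [heinrichE]
  calc _ ≤ ‖∫ ω, ∏ m ∈ range (k + 1), Y m ω ∂μ‖ +
        ∑ j ∈ (range k).attach, ‖heinrichE μ Y j * ∫ ω, ∏ m ∈ Icc (j.1 + 1) k, Y m ω ∂μ‖ :=
        (norm_sub_le _ _).trans (add_le_add le_rfl (norm_sum_le _ _))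
    _ ≤ P + ∑ j ∈ range k, 2 ^ j * P := by
        rw [← sum_attach (range k)]
        exact add_le_add (hdep.norm_integral_prod_le hL2 _)
          (sum_le_sum fun j _ => hterm j (mem_range.mp j.2))
    _ = 2 ^ k * P := by
        rw [← sum_mul, geom_sum_eq (by norm_num : (2 : ℝ) ≠ 1)]
        ring

end OneDependent

theorem heinrich_cumulant_bound {Ω : Type*} [MeasurableSpace Ω] (μ : Measure Ω)
    [IsProbabilityMeasure μ] (Y : ℕ → Ω → ℂ) (k : ℕ) (hk : 1 ≤ k)
    (hL2 : ∀ m, MeasureTheory.MemLp (Y m) 2 μ)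
    (hdep : OneDependent μ Y) :
    ‖heinrichE μ Y (k - 1)‖ ≤
      2 ^ (k - 1) * ∏ m ∈ Finset.range k,
        Real.sqrt (∫ ω, ‖Y m ω‖ ^ 2 ∂μ) := by
  obtain ⟨n, rfl⟩ := Nat.exists_eq_add_of_le' hk
  simpa using hdep.norm_heinrichE_le hL2 n
end

section
/- For all real x ≥ 1, x^x e^{-x} √(2π(x + 0.16)) < Γ(x+1) < x^x e^{-x} √(2π(x + 0.18)). -/
/-!
Write `log Γ(x) = (x - 1/2) log x - x + log (2π) / 2 + μ(x)` (μ is `stirlingRemainder`).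
The claim amounts to `log (1 + 0.16/x) < 2 μ(x) < log (1 + 0.18/x)`. The increment
`μ(y) - μ(y + 1) = (y + 1/2) log (1 + 1/y) - 1` is the series `∑_{k ≥ 1} r^k / (2k + 1)`
with `r = (2y + 1)⁻²`, which is squeezed between the increments of `1/(12y + 1)` and of
`1/(12y) - 1/(500y³)` for `y ≥ 1`. All three functions tend to `0` along `x + ℕ` (for `μ` this
is Stirling's formula together with Euler's limit formula for `Γ`), so telescoping gives
`1/(12x + 1) < μ(x) < 1/(12x) - 1/(500x³)`; two elementary bounds on the logarithm finish the
proof.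
-/

open Real Filter Topology
open scoped Nat

lemma lt_of_sub_add_one_lt {f g : ℝ → ℝ} {a x : ℝ} (hx : a ≤ x)
    (hstep : ∀ y, a ≤ y → f y - f (y + 1) < g y - g (y + 1))
    (hf : Tendsto (fun n : ℕ => f (x + n)) atTop (𝓝 0))
    (hg : Tendsto (fun n : ℕ => g (x + n)) atTop (𝓝 0)) : f x < g x := by
  set h : ℕ → ℝ := fun n => g (x + n) - f (x + n) with h_def
  have h_succ_lt : ∀ n : ℕ, h (n + 1) < h n := fun n => by
    have := hstep (x + n) (by linarith [(Nat.cast_nonneg n : (0 : ℝ) ≤ n)])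
    simp only [h_def, Nat.cast_succ, ← add_assoc]
    linarith
  have h_one_nonneg : 0 ≤ h 1 :=
    (antitone_nat_of_succ_le fun n => (h_succ_lt n).le).le_of_tendsto (by simpa using hg.sub hf) 1
  have := h_one_nonneg.trans_lt (h_succ_lt 0)
  simp only [h_def, Nat.cast_zero, add_zero] at this
  linarith

lemma tendsto_comp_add_nat {f : ℝ → ℝ} {L : ℝ} (hf : Tendsto f atTop (𝓝 L)) (x : ℝ) :
    Tendsto (fun n : ℕ => f (x + n)) atTop (𝓝 L) :=
  hf.comp (tendsto_atTop_add_const_left _ x tendsto_natCast_atTop_atTop)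

section SeriesBounds

variable {r S : ℝ}

lemma div_three_lt_of_hasSum (hr : 0 < r)
    (hS : HasSum (fun k : ℕ => r ^ (k + 1) / (2 * k + 3)) S) : r / 3 < S := by
  have := sum_le_hasSum (Finset.range 2) (fun k _ => by positivity) hS
  norm_num [Finset.sum_range_succ] at this
  nlinarith [pow_pos hr 2]

lemma lt_div_three_add_of_hasSum (hr₀ : 0 < r) (hr₁ : r < 1)
    (hS : HasSum (fun k : ℕ => r ^ (k + 1) / (2 * k + 3)) S) :
    S < r / 3 + r ^ 2 / (5 * (1 - r)) := by
  rw [← hasSum_nat_add_iff' 1] at hS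
  have hgeom := (hasSum_geometric_of_lt_one hr₀.le hr₁).mul_left (r ^ 2 / 5)
  have := hasSum_lt (i := 1) (fun k => ?_) ?_ hS hgeom
  · norm_num at this
    rw [← div_div, div_eq_mul_inv (r ^ 2 / 5)]
    linarith
  · calc r ^ (k + 1 + 1) / (2 * ((k + 1 : ℕ) : ℝ) + 3) ≤ r ^ (k + 1 + 1) / 5 := by
          gcongr
          push_cast
          linarith [(Nat.cast_nonneg k : (0 : ℝ) ≤ k)]
      _ = r ^ 2 / 5 * r ^ k := by ring
  · norm_num
    rw [div_lt_iff₀ (by positivity)]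
    nlinarith [pow_pos hr₀ 3]

end SeriesBounds

lemma log_add_sub_log_le {x a : ℝ} (hx : 0 < x) (ha : 0 ≤ a) :
    log (x + a) - log x ≤ a * (2 * x + a) / (2 * x * (x + a)) := by
  have hxa : 0 < x + a := by linarith
  rw [← log_div hxa.ne' hx.ne']
  calc log ((x + a) / x) ≤ sinh (log ((x + a) / x)) :=
        self_le_sinh_iff.2 (log_nonneg ((one_le_div hx).2 (by linarith)))
    _ = a * (2 * x + a) / (2 * x * (x + a)) := by
        rw [sinh_log (by positivity)]
        field_simp
        ring

lemma lt_log_add_sub_log {x a : ℝ} (hx : 0 < x) (ha : 0 < a) :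
    2 * a / (2 * x + a) < log (x + a) - log x := by
  rw [← log_div (by linarith) hx.ne']
  convert lt_log_one_add_of_pos (div_pos ha hx) using 1
  · field_simp
    ring
  · rw [one_add_div hx.ne', add_comm]

lemma tendsto_add_mul_log_add_sub_log (b c : ℝ) :
    Tendsto (fun n : ℕ => (n + b) * (log (n + c) - log n)) atTop (𝓝 c) := by
  have hlog : Tendsto (fun n : ℕ => log (1 + c / n)) atTop (𝓝 0) := by
    have h1 : Tendsto (fun n : ℕ => 1 + c / n) atTop (𝓝 1) := by
      simpa using (tendsto_const_div_atTop_nhds_zero_nat c).const_add 1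
    simpa [Function.comp_def] using (continuousAt_log one_ne_zero).tendsto.comp h1
  have h := ((tendsto_mul_log_one_add_div_atTop c).comp tendsto_natCast_atTop_atTop).add
    (hlog.const_mul b)
  rw [mul_zero, add_zero] at h
  refine h.congr' ?_
  filter_upwards [eventually_gt_atTop 0, tendsto_natCast_atTop_atTop.eventually_gt_atTop (-c)]
    with n hn hnc
  have hn' : (0 : ℝ) < n := Nat.cast_pos.2 hn
  rw [Function.comp_apply, ← log_div (by linarith) hn'.ne', add_div, div_self hn'.ne']
  ring

lemma tendsto_log_factorial_sub_stirling :
    Tendsto (fun n : ℕ => log (n ! : ℝ) - ((n + 1 / 2) * log n - n + log (2 * π) / 2))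
      atTop (𝓝 0) := by
  have h := ((continuousAt_log (sqrt_pos.2 pi_pos).ne').tendsto.comp
    Stirling.tendsto_stirlingSeq_sqrt_pi).sub_const (log √π)
  rw [sub_self] at h
  refine h.congr' ?_
  filter_upwards [eventually_ne_atTop 0] with n hn
  have hn' : (n : ℝ) ≠ 0 := Nat.cast_ne_zero.2 hn
  rw [Function.comp_apply, Stirling.log_stirlingSeq_formula, log_sqrt pi_pos.le,
    log_mul two_ne_zero hn', log_div hn' (exp_ne_zero 1), log_exp,
    log_mul two_ne_zero pi_pos.ne']
  ring

lemma tendsto_mul_log_add_log_factorial_sub_log_Gamma {x : ℝ} (hx : 0 < x) :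
    Tendsto (fun n : ℕ => x * log n + log (n ! : ℝ) - log (Gamma (x + n + 1)))
      atTop (𝓝 0) := by
  have h := (BohrMollerup.tendsto_log_gamma hx).sub_const (log (Gamma x))
  rw [sub_self] at h
  refine h.congr fun n => ?_
  have hsum := BohrMollerup.f_add_nat_eq (f := log ∘ Gamma) (fun {y} hy => by
    rw [Function.comp_apply, Gamma_add_one hy.ne', log_mul hy.ne' (Gamma_pos_of_pos hy).ne',
      add_comm, Function.comp_apply]) hx (n + 1)
  simp only [Function.comp_apply, Nat.cast_succ, ← add_assoc] at hsum
  rw [BohrMollerup.logGammaSeq, hsum]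
  ring

lemma hasSum_add_one_half_mul_log_one_add_inv_sub_one {y : ℝ} (hy : 0 < y) :
    HasSum (fun k : ℕ => ((2 * y + 1) ^ 2)⁻¹ ^ (k + 1) / (2 * (k : ℝ) + 3))
      ((y + 1 / 2) * log (1 + y⁻¹) - 1) := by
  have h := (hasSum_log_one_add_inv hy).mul_left (y + 1 / 2)
  rw [← hasSum_nat_add_iff' 1] at h
  convert h using 1
  · rfl
  · funext k
    rw [inv_pow, ← pow_mul, one_div (2 * y + 1), pow_succ, inv_pow]
    push_cast
    field_simp
    ring
  · norm_num
    field_simp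

noncomputable def stirlingRemainder (x : ℝ) : ℝ :=
  log (Gamma x) - ((x - 1 / 2) * log x - x + log (2 * π) / 2)

lemma stirlingRemainder_sub_stirlingRemainder_add_one {y : ℝ} (hy : 0 < y) :
    stirlingRemainder y - stirlingRemainder (y + 1) = (y + 1 / 2) * log (1 + y⁻¹) - 1 := by
  rw [stirlingRemainder, stirlingRemainder, Gamma_add_one hy.ne',
    log_mul hy.ne' (Gamma_pos_of_pos hy).ne', show 1 + y⁻¹ = (y + 1) / y by field_simp,
    log_div (by positivity) hy.ne']
  ring

lemma tendsto_stirlingRemainder_add_nat {x : ℝ} (hx : 0 < x) :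
    Tendsto (fun n : ℕ => stirlingRemainder (x + n)) atTop (𝓝 0) := by
  rw [← tendsto_add_atTop_iff_nat 1]
  have h := ((tendsto_mul_log_add_log_factorial_sub_log_Gamma hx).neg.add
    tendsto_log_factorial_sub_stirling).sub
    ((tendsto_add_mul_log_add_sub_log (x + 1 / 2) (x + 1)).sub_const (x + 1))
  simp only [neg_zero, add_zero, sub_self] at h
  refine h.congr fun n => ?_
  rw [stirlingRemainder, Nat.cast_succ, show x + (n + 1) = x + n + 1 by ring,
    show n + (x + 1) = x + n + 1 by ring]
  ring

lemma inv_twelve_mul_add_one_lt_stirlingRemainder {x : ℝ} (hx : 1 ≤ x) :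
    (12 * x + 1)⁻¹ < stirlingRemainder x := by
  refine lt_of_sub_add_one_lt (f := fun y => (12 * y + 1)⁻¹) (g := stirlingRemainder) hx
    (fun y hy => ?_) (tendsto_comp_add_nat (f := fun y => (12 * y + 1)⁻¹) ?_ x)
    (tendsto_stirlingRemainder_add_nat (by linarith))
  · have hy₀ : 0 < y := by linarith
    rw [stirlingRemainder_sub_stirlingRemainder_add_one hy₀]
    refine lt_of_le_of_lt ?_ (div_three_lt_of_hasSum (by positivity)
      (hasSum_add_one_half_mul_log_one_add_inv_sub_one hy₀))
    rw [inv_sub_inv (by positivity) (by positivity), div_le_iff₀ (by positivity)]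
    field_simp
    nlinarith
  · exact tendsto_inv_atTop_zero.comp
      (tendsto_atTop_add_const_right _ 1 (tendsto_id.const_mul_atTop (by norm_num)))

lemma stirlingRemainder_lt {x : ℝ} (hx : 1 ≤ x) :
    stirlingRemainder x < (12 * x)⁻¹ - (500 * x ^ 3)⁻¹ := by
  refine lt_of_sub_add_one_lt (f := stirlingRemainder)
    (g := fun y => (12 * y)⁻¹ - (500 * y ^ 3)⁻¹) hx (fun y hy => ?_)
    (tendsto_stirlingRemainder_add_nat (by linarith))
    (tendsto_comp_add_nat (f := fun y => (12 * y)⁻¹ - (500 * y ^ 3)⁻¹) ?_ x)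
  · have hy₀ : 0 < y := by linarith
    set r := ((2 * y + 1) ^ 2)⁻¹ with hr
    have hr₀ : 0 < r := by positivity
    have hr₁ : r < 1 := inv_lt_one_of_one_lt₀ (by nlinarith)
    rw [stirlingRemainder_sub_stirlingRemainder_add_one hy₀]
    refine (lt_div_three_add_of_hasSum hr₀ hr₁
      (hasSum_add_one_half_mul_log_one_add_inv_sub_one hy₀)).trans_le ?_
    have key : (12 * y)⁻¹ - (500 * y ^ 3)⁻¹ - ((12 * (y + 1))⁻¹ - (500 * (y + 1) ^ 3)⁻¹)
        - (r / 3 + r ^ 2 / (5 * (1 - r)))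
        = (14 * y ^ 4 + 28 * y ^ 3 - 7 * y ^ 2 - 21 * y - 3)
          / (1500 * (y ^ 3 * (y + 1) ^ 3 * (2 * y + 1) ^ 2)) := by
      have h1r : r ^ 2 / (5 * (1 - r)) = r / (20 * y * (y + 1)) := by
        rw [show 1 - r = 4 * y * (y + 1) * r by rw [hr]; field_simp; ring]
        field_simp
        ring
      rw [h1r, hr]
      field_simp
      ring
    have : 0 ≤ (14 * y ^ 4 + 28 * y ^ 3 - 7 * y ^ 2 - 21 * y - 3)
          / (1500 * (y ^ 3 * (y + 1) ^ 3 * (2 * y + 1) ^ 2)) := by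
      apply div_nonneg _ (by positivity)
      nlinarith [mul_le_mul hy hy zero_le_one hy₀.le]
    linarith
  · simpa using
      (tendsto_inv_atTop_zero.comp (tendsto_id.const_mul_atTop (by norm_num : (0 : ℝ) < 12))).sub
        (tendsto_inv_atTop_zero.comp
          ((tendsto_pow_atTop three_ne_zero).const_mul_atTop (by norm_num : (0 : ℝ) < 500)))

lemma log_add_sub_log_lt_two_mul_stirlingRemainder {x : ℝ} (hx : 1 ≤ x) :
    log (x + 0.16) - log x < 2 * stirlingRemainder x := by
  have hx₀ : 0 < x := by linarith
  calc log (x + 0.16) - log x ≤ 0.16 * (2 * x + 0.16) / (2 * x * (x + 0.16)) :=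
        log_add_sub_log_le hx₀ (by norm_num)
    _ ≤ 2 * (12 * x + 1)⁻¹ := by
        rw [div_le_iff₀ (by positivity)]
        field_simp
        nlinarith
    _ < 2 * stirlingRemainder x := by
        linarith [inv_twelve_mul_add_one_lt_stirlingRemainder hx]

lemma two_mul_stirlingRemainder_lt_log_add_sub_log {x : ℝ} (hx : 1 ≤ x) :
    2 * stirlingRemainder x < log (x + 0.18) - log x := by
  have hx₀ : 0 < x := by linarith
  calc 2 * stirlingRemainder x < 2 * ((12 * x)⁻¹ - (500 * x ^ 3)⁻¹) := by
        linarith [stirlingRemainder_lt hx]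
    _ ≤ 2 * 0.18 / (2 * x + 0.18) := by
        rw [le_div_iff₀ (by positivity)]
        field_simp
        nlinarith [mul_le_mul hx hx zero_le_one hx₀.le]
    _ < log (x + 0.18) - log x := lt_log_add_sub_log hx₀ (by norm_num)

lemma log_rpow_self_mul_exp_neg_mul_sqrt {x a : ℝ} (hx : 0 < x) (ha : 0 ≤ a) :
    log (x ^ x * exp (-x) * √(2 * π * (x + a))) =
      log (Gamma (x + 1)) - stirlingRemainder x + (log (x + a) - log x) / 2 := by
  rw [log_mul (by positivity) (by positivity), log_mul (by positivity) (by positivity),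
    log_rpow hx, log_exp, log_sqrt (by positivity), log_mul (by positivity) (by linarith),
    Gamma_add_one hx.ne', log_mul hx.ne' (Gamma_pos_of_pos hx).ne', stirlingRemainder]
  ring

theorem gamma_stirling_two_sided (x : ℝ) (hx : 1 ≤ x) :
    Real.rpow x x * Real.exp (-x) * Real.sqrt (2 * π * (x + 0.16)) < Real.Gamma (x + 1) ∧
    Real.Gamma (x + 1) < Real.rpow x x * Real.exp (-x) * Real.sqrt (2 * π * (x + 0.18)) := by
  have hx₀ : 0 < x := by linarith
  have hΓ : 0 < Gamma (x + 1) := Gamma_pos_of_pos (by linarith)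
  rw [rpow_eq_pow]
  constructor
  · rw [← log_lt_log_iff (by positivity) hΓ,
      log_rpow_self_mul_exp_neg_mul_sqrt hx₀ (by norm_num)]
    linarith [log_add_sub_log_lt_two_mul_stirlingRemainder hx]
  · rw [← log_lt_log_iff hΓ (by positivity),
      log_rpow_self_mul_exp_neg_mul_sqrt hx₀ (by norm_num)]
    linarith [two_mul_stirlingRemainder_lt_log_add_sub_log hx]
end

section
/- Let M be a finite signed measure on the integers with Σ_{k∈ℤ} |k||M{k}| < ∞, and let M̂(it) = Σ_k e^{itk} M{k}. Then for any real a and any b > 0, the total variation norm ‖M‖ := Σ_k |M{k}| satisfies ‖M‖ ≤ (1 + bπ)^{1/2} ( (1/2π) ∫_{-π}^{π} ( |M̂(it)|² + b^{-2} |(e^{-ita} M̂(it))'|² ) dt )^{1/2}, where the derivative is with respect to t. -/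
/-!
Cauchy–Schwarz with the weight `w k = 1 + ((k - a) / b) ^ 2` gives
`‖M‖ ≤ (∑ₖ 1 / w k) ^ (1/2) * (∑ₖ w k * M{k} ^ 2) ^ (1/2)`. The first sum samples at the integers
a Lorentzian profile, which is unimodal with maximum `1` and total integral `b π`, so it is at most
`1 + b π`. The second sum is the right-hand integral by Parseval, applied to `M̂` and to
`(e^{-ita} M̂)' = e^{-ita} ∑ₖ i (k - a) M{k} e^{itk}`.
-/

open Real MeasureTheory Set

theorem add_le_add_integral_of_unimodal {f : ℝ → ℝ} {a x : ℝ} (hf : Continuous f)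
    (hmono : MonotoneOn f (Iic a)) (hanti : AntitoneOn f (Ici a)) (hxa : x ≤ a) (hax : a ≤ x + 1) :
    f x + f (x + 1) ≤ f a + ∫ t in x..x + 1, f t := by
  have hmin : min (f x) (f (x + 1)) ≤ ∫ t in x..x + 1, f t := by
    calc min (f x) (f (x + 1)) = ∫ _ in x..x + 1, min (f x) (f (x + 1)) := by simp
      _ ≤ ∫ t in x..x + 1, f t := by
        refine intervalIntegral.integral_mono_on (by linarith) intervalIntegrable_const
          (hf.intervalIntegrable _ _) fun t ht => ?_
        rcases le_total t a with hta | hat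
        · exact (min_le_left _ _).trans (hmono hxa hta ht.1)
        · exact (min_le_right _ _).trans (hanti hat (hat.trans ht.2) ht.2)
  have hmax : max (f x) (f (x + 1)) ≤ f a :=
    max_le (hmono hxa self_mem_Iic hxa) (hanti self_mem_Ici hax hax)
  linarith [min_add_max (f x) (f (x + 1))]

theorem sum_int_le_of_unimodal {f : ℝ → ℝ} {a I : ℝ} (hf : Continuous f) (hf0 : ∀ x, 0 ≤ f x)
    (hmono : MonotoneOn f (Iic a)) (hanti : AntitoneOn f (Ici a))
    (hI : ∀ u v, u ≤ v → ∫ x in u..v, f x ≤ I) (s : Finset ℤ) :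
    ∑ k ∈ s, f k ≤ f a + I := by
  classical
  -- Integers below `⌊a⌋` are dominated by the integral over the unit interval to their right,
  -- those above `⌊a⌋ + 1` by the one to their left.
  set n := ⌊a⌋
  have hna : (n : ℝ) ≤ a := Int.floor_le a
  have han : a ≤ n + 1 := (Int.lt_floor_add_one a).le
  set N := s.sup fun k => (k - n).natAbs
  have hs : s ⊆ (Finset.range (N + 2 + N)).image fun i : ℕ => n - N + i := by
    intro k hk
    have : (k - n).natAbs ≤ N := Finset.le_sup (f := fun k => (k - n).natAbs) hk
    simp only [Finset.mem_image, Finset.mem_range]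
    exact ⟨(k - n + N).toNat, by omega, by omega⟩
  have hleft : ∑ i ∈ Finset.range N, f ((n - N : ℝ) + i) ≤ ∫ x in (n - N : ℝ)..n, f x := by
    convert (hmono.mono fun x hx => ?_).sum_le_integral using 2
    · ring
    · exact hx.2.trans (by linarith)
  have hright : ∑ i ∈ Finset.range N, f ((n + 1 : ℝ) + ↑(i + 1)) ≤
      ∫ x in (n + 1 : ℝ)..n + 1 + N, f x :=
    (hanti.mono fun x hx => han.trans hx.1).sum_le_integral
  calc ∑ k ∈ s, f k
      ≤ ∑ k ∈ (Finset.range (N + 2 + N)).image (fun i : ℕ => n - N + i), f k :=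
        Finset.sum_le_sum_of_subset_of_nonneg hs fun k _ _ => hf0 k
    _ = ∑ i ∈ Finset.range N, f ((n - N : ℝ) + i) + (f n + f (n + 1))
          + ∑ i ∈ Finset.range N, f ((n + 1 : ℝ) + ↑(i + 1)) := by
        rw [Finset.sum_image fun i _ j _ h => by simpa using h, Finset.sum_range_add,
          Finset.sum_range_add, Finset.sum_range_succ, Finset.sum_range_one]
        push_cast
        ring_nf
    _ ≤ (∫ x in (n - N : ℝ)..n, f x) + (f a + ∫ x in (n : ℝ)..n + 1, f x)
          + ∫ x in (n + 1 : ℝ)..n + 1 + N, f x := by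
        gcongr ?_ + ?_ + ?_
        exact add_le_add_integral_of_unimodal hf hmono hanti hna han
    _ = f a + ∫ x in (n - N : ℝ)..n + 1 + N, f x := by
        have hint := fun u v => hf.intervalIntegrable (μ := volume) u v
        have := intervalIntegral.integral_add_adjacent_intervals (hint (n - N) n) (hint n (n + 1))
        have := intervalIntegral.integral_add_adjacent_intervals (hint (n - N) (n + 1))
          (hint (n + 1) (n + 1 + N))
        linarith
    _ ≤ f a + I := by gcongr; exact hI _ _ (by linarith [(N.cast_nonneg : (0 : ℝ) ≤ N)])

noncomputable def lorentzian (a b x : ℝ) : ℝ := (1 + ((x - a) / b) ^ 2)⁻¹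

theorem lorentzian_pos (a b x : ℝ) : 0 < lorentzian a b x := by
  unfold lorentzian; positivity

theorem lorentzian_self (a b : ℝ) : lorentzian a b a = 1 := by
  simp [lorentzian]

theorem continuous_lorentzian (a b : ℝ) : Continuous (lorentzian a b) :=
  Continuous.inv₀ (by fun_prop) fun x => by positivity

theorem lorentzian_le_lorentzian {a b x y : ℝ} (h : (y - a) ^ 2 ≤ (x - a) ^ 2) :
    lorentzian a b x ≤ lorentzian a b y := by
  unfold lorentzian
  rw [div_pow, div_pow]
  gcongr

theorem monotoneOn_lorentzian (a b : ℝ) : MonotoneOn (lorentzian a b) (Iic a) :=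
  fun x _ y (hy : y ≤ a) hxy => lorentzian_le_lorentzian (by nlinarith)

theorem antitoneOn_lorentzian (a b : ℝ) : AntitoneOn (lorentzian a b) (Ici a) :=
  fun x (hx : a ≤ x) y _ hxy => lorentzian_le_lorentzian (by nlinarith)

theorem integral_lorentzian (a : ℝ) {b : ℝ} (hb : b ≠ 0) (u v : ℝ) :
    ∫ x in u..v, lorentzian a b x = b * (arctan ((v - a) / b) - arctan ((u - a) / b)) := by
  have h := intervalIntegral.integral_comp_div_sub (a := u) (b := v)
    (fun x => (1 + x ^ 2)⁻¹) hb (a / b)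
  simp only [integral_inv_one_add_sq, ← sub_div, smul_eq_mul] at h
  simpa [lorentzian, sub_div] using h

theorem integral_lorentzian_le (a : ℝ) {b : ℝ} (hb : 0 < b) (u v : ℝ) :
    ∫ x in u..v, lorentzian a b x ≤ b * π := by
  rw [integral_lorentzian a hb.ne']
  have := arctan_lt_pi_div_two ((v - a) / b)
  have := neg_pi_div_two_lt_arctan ((u - a) / b)
  gcongr
  linarith

theorem sum_lorentzian_le (a : ℝ) {b : ℝ} (hb : 0 < b) (s : Finset ℤ) :
    ∑ k ∈ s, lorentzian a b k ≤ 1 + b * π := by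
  simpa only [lorentzian_self] using sum_int_le_of_unimodal (continuous_lorentzian a b)
    (fun x => (lorentzian_pos a b x).le) (monotoneOn_lorentzian a b) (antitoneOn_lorentzian a b)
    (fun u v _ => integral_lorentzian_le a hb u v) s

theorem tsum_abs_le_sqrt_mul_sqrt_of_sum_le {ι : Type*} {x p : ι → ℝ} {A : ℝ}
    (hp : ∀ i, 0 < p i) (hA : ∀ s : Finset ι, ∑ i ∈ s, p i ≤ A)
    (hx : Summable fun i => x i ^ 2 / p i) :
    ∑' i, |x i| ≤ √A * √(∑' i, x i ^ 2 / p i) := by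
  refine tsum_le_of_sum_le' (by positivity) fun s => ?_
  calc ∑ i ∈ s, |x i| = ∑ i ∈ s, √(p i) * √(x i ^ 2 / p i) :=
        Finset.sum_congr rfl fun i _ => by
          rw [← Real.sqrt_mul (hp i).le, mul_div_cancel₀ _ (hp i).ne', Real.sqrt_sq_eq_abs]
    _ ≤ √(∑ i ∈ s, p i) * √(∑ i ∈ s, x i ^ 2 / p i) :=
        Real.sum_sqrt_mul_sqrt_le s (fun i => (hp i).le) fun i => div_nonneg (sq_nonneg _) (hp i).le
    _ ≤ √A * √(∑' i, x i ^ 2 / p i) := by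
        gcongr
        · exact hA s
        · exact hx.sum_le_tsum s fun i _ => div_nonneg (sq_nonneg _) (hp i).le

noncomputable def trigSeries (c : ℤ → ℂ) (t : ℝ) : ℂ :=
  ∑' k : ℤ, c k * Complex.exp (Complex.I * t * k)

theorem norm_exp_I_mul_ofReal_mul (t x : ℝ) : ‖Complex.exp (Complex.I * t * x)‖ = 1 := by
  rw [mul_assoc, ← Complex.ofReal_mul, Complex.norm_exp_I_mul_ofReal]

theorem norm_mul_exp_I_mul_intCast (z : ℂ) (t : ℝ) (k : ℤ) :
    ‖z * Complex.exp (Complex.I * t * k)‖ = ‖z‖ := by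
  rw [norm_mul, ← Complex.ofReal_intCast, norm_exp_I_mul_ofReal_mul, mul_one]

section TrigSeries

variable {c : ℤ → ℂ}

theorem continuous_trigSeries (hc : Summable fun k => ‖c k‖) : Continuous (trigSeries c) :=
  continuous_tsum (fun k => by fun_prop) hc fun k t => (norm_mul_exp_I_mul_intCast _ t k).le

theorem norm_trigSeries_le (hc : Summable fun k => ‖c k‖) (t : ℝ) :
    ‖trigSeries c t‖ ≤ ∑' k, ‖c k‖ :=
  (norm_tsum_le_tsum_norm (by simpa only [norm_mul_exp_I_mul_intCast] using hc)).trans_eq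
    (tsum_congr fun k => norm_mul_exp_I_mul_intCast _ _ _)

theorem integral_exp_I_mul_intCast (m : ℤ) :
    ∫ t in (-π)..π, Complex.exp (Complex.I * t * m) = if m = 0 then (2 * π : ℂ) else 0 := by
  split_ifs with hm
  · simp only [hm, Int.cast_zero, mul_zero, Complex.exp_zero, intervalIntegral.integral_const,
      sub_neg_eq_add, Complex.real_smul, Complex.ofReal_add, mul_one]
    ring
  have hIm : Complex.I * m ≠ 0 := mul_ne_zero Complex.I_ne_zero (by exact_mod_cast hm)
  simp_rw [mul_right_comm Complex.I _ (m : ℂ)]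
  rw [integral_exp_mul_complex hIm, div_eq_zero_iff, sub_eq_zero]
  left
  rw [show Complex.I * m * ((-π : ℝ) : ℂ) = Complex.I * m * π + (-m) * (2 * π * Complex.I) by
    push_cast; ring, Complex.exp_add, ← Int.cast_neg, Complex.exp_int_mul_two_pi_mul_I, mul_one]

theorem integral_trigSeries (hc : Summable fun k => ‖c k‖) :
    ∫ t in (-π)..π, trigSeries c t = 2 * π * c 0 := by
  let F : ℤ → C(ℝ, ℂ) := fun k => ⟨fun t => c k * Complex.exp (Complex.I * t * k), by fun_prop⟩
  let K : TopologicalSpace.Compacts ℝ := ⟨uIcc (-π) π, isCompact_uIcc⟩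
  have hF : Summable fun k => ‖(F k).restrict K‖ :=
    .of_nonneg_of_le (fun _ => norm_nonneg _)
      (fun k => (ContinuousMap.norm_le _ (norm_nonneg _)).2 fun t =>
        (norm_mul_exp_I_mul_intCast _ _ _).le) hc
  have := intervalIntegral.tsum_intervalIntegral_eq_of_summable_norm hF
  simp only [F, ContinuousMap.coe_mk, intervalIntegral.integral_const_mul,
    integral_exp_I_mul_intCast, mul_ite, mul_zero, tsum_ite_eq] at this
  rw [mul_comm, this]
  rfl

theorem exp_neg_mul_trigSeries (n : ℤ) (t : ℝ) :
    Complex.exp (-(Complex.I * t * n)) * trigSeries c t = trigSeries (fun k => c (k + n)) t := by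
  rw [trigSeries, trigSeries, ← tsum_mul_left, ← (Equiv.addRight n).tsum_eq]
  refine tsum_congr fun k => ?_
  rw [Equiv.coe_addRight, mul_left_comm, ← Complex.exp_add]
  push_cast
  ring_nf

theorem fourierCoeffOn_trigSeries (hc : Summable fun k => ‖c k‖) (n : ℤ) :
    fourierCoeffOn (neg_lt_self pi_pos) (trigSeries c) n = c n := by
  have hshift : Summable fun k => ‖c (k + n)‖ := (Equiv.addRight n).summable_iff.2 hc
  have hexp : ∀ t : ℝ,
      fourier (-n) (t : AddCircle (π - -π)) = Complex.exp (-(Complex.I * t * n)) := by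
    intro t
    rw [fourier_coe_apply]
    congr 1
    push_cast
    field_simp
    ring
  rw [fourierCoeffOn_eq_integral]
  simp_rw [hexp, smul_eq_mul, exp_neg_mul_trigSeries, integral_trigSeries hshift, zero_add,
    Complex.real_smul]
  push_cast
  field_simp
  ring

theorem hasSum_norm_sq_trigSeries (hc : Summable fun k => ‖c k‖) :
    HasSum (fun k => ‖c k‖ ^ 2) ((2 * π)⁻¹ * ∫ t in (-π)..π, ‖trigSeries c t‖ ^ 2) := by
  have hL2 : MemLp (trigSeries c) 2 (volume.restrict (Ioc (-π) π)) :=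
    .of_bound (continuous_trigSeries hc).aestronglyMeasurable _
      (ae_of_all _ (norm_trigSeries_le hc))
  have := hasSum_sq_fourierCoeffOn (neg_lt_self pi_pos) hL2
  simp only [fourierCoeffOn_trigSeries hc, smul_eq_mul] at this
  convert this using 2
  ring

theorem norm_I_mul_sub_mul (k : ℤ) (a : ℝ) (z : ℂ) :
    ‖Complex.I * (k - a) * z‖ = |k - a| * ‖z‖ := by
  rw [norm_mul, norm_mul, Complex.norm_I, one_mul, ← Complex.ofReal_intCast, ← Complex.ofReal_sub,
    Complex.norm_real, Real.norm_eq_abs]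

theorem summable_norm_I_mul_sub_mul (hc : Summable fun k => ‖c k‖)
    (hc' : Summable fun k : ℤ => |(k : ℝ)| * ‖c k‖) (a : ℝ) :
    Summable fun k : ℤ => ‖Complex.I * (k - a) * c k‖ := by
  refine .of_nonneg_of_le (fun _ => norm_nonneg _) (fun k => ?_) (hc'.add (hc.mul_left |a|))
  rw [norm_I_mul_sub_mul, ← add_mul]
  exact mul_le_mul_of_nonneg_right (abs_sub _ _) (norm_nonneg _)

theorem hasDerivAt_exp_mul_trigSeries {a : ℝ} (hc : Summable fun k => ‖c k‖)
    (hd : Summable fun k : ℤ => ‖Complex.I * (k - a) * c k‖) (t : ℝ) :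
    HasDerivAt (fun s : ℝ => Complex.exp (-Complex.I * s * a) * trigSeries c s)
      (Complex.exp (-Complex.I * t * a) * trigSeries (fun k => Complex.I * (k - a) * c k) t) t := by
  have hmod : ∀ (d : ℤ → ℂ) (s : ℝ), Complex.exp (-Complex.I * s * a) * trigSeries d s =
      ∑' k : ℤ, d k * Complex.exp (Complex.I * (k - a) * s) := fun d s => by
    rw [trigSeries, ← tsum_mul_left]
    refine tsum_congr fun k => ?_
    rw [mul_left_comm, ← Complex.exp_add]
    ring_nf
  have hterm : ∀ (k : ℤ) (s : ℝ),
      HasDerivAt (fun s : ℝ => c k * Complex.exp (Complex.I * (k - a) * s))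
        (Complex.I * (k - a) * c k * Complex.exp (Complex.I * (k - a) * s)) s := fun k s => by
    refine (((hasDerivAt_id s).ofReal_comp.const_mul (Complex.I * (k - a))).cexp.const_mul
      (c k)).congr_deriv ?_
    simp only [id_eq, Complex.ofReal_one]
    ring
  have hbound : ∀ (k : ℤ) (s : ℝ),
      ‖Complex.I * (k - a) * c k * Complex.exp (Complex.I * (k - a) * s)‖ ≤
        ‖Complex.I * (k - a) * c k‖ := fun k s => by
    rw [norm_mul, ← Complex.ofReal_intCast, ← Complex.ofReal_sub, mul_right_comm,
      norm_exp_I_mul_ofReal_mul, mul_one]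
  have h0 : Summable fun k : ℤ => c k * Complex.exp (Complex.I * (k - a) * (0 : ℝ)) := by
    simp only [Complex.ofReal_zero, mul_zero, Complex.exp_zero, mul_one]
    exact hc.of_norm
  simp_rw [hmod]
  exact hasDerivAt_tsum hd hterm hbound h0 t

theorem norm_deriv_exp_mul_trigSeries {a : ℝ} (hc : Summable fun k => ‖c k‖)
    (hd : Summable fun k : ℤ => ‖Complex.I * (k - a) * c k‖) (t : ℝ) :
    ‖deriv (fun s : ℝ => Complex.exp (-Complex.I * s * a) * trigSeries c s) t‖ =
      ‖trigSeries (fun k => Complex.I * (k - a) * c k) t‖ := by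
  rw [(hasDerivAt_exp_mul_trigSeries hc hd t).deriv, norm_mul,
    show -Complex.I * t * a = Complex.I * t * (-a : ℝ) by push_cast; ring,
    norm_exp_I_mul_ofReal_mul, one_mul]

end TrigSeries

theorem tv_inversion_inequality (M : ℤ → ℝ)
    (habs : Summable fun k : ℤ => |M k|)
    (hmom : Summable fun k : ℤ => |(k : ℝ)| * |M k|)
    (a : ℝ) (b : ℝ) (hb : 0 < b) :
    (∑' k : ℤ, |M k|) ≤
      Real.sqrt (1 + b * π) *
        Real.sqrt ((1 / (2 * π)) * ∫ t in (-π)..π,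
          ‖∑' k : ℤ, (M k : ℂ) * Complex.exp (Complex.I * t * k)‖ ^ 2 +
          b⁻¹ ^ 2 * ‖deriv (fun s : ℝ =>
            Complex.exp (-Complex.I * s * a) *
              ∑' k : ℤ, (M k : ℂ) * Complex.exp (Complex.I * s * k)) t‖ ^ 2) := by
  have hc : Summable fun k : ℤ => ‖(M k : ℂ)‖ := by simpa using habs
  have hd := summable_norm_I_mul_sub_mul hc (by simpa using hmom) a
  change _ ≤ √(1 + b * π) * √((1 / (2 * π)) * ∫ t in (-π)..π,
    ‖trigSeries (fun k => (M k : ℂ)) t‖ ^ 2 + b⁻¹ ^ 2 * ‖deriv (fun s : ℝ =>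
      Complex.exp (-Complex.I * s * a) * trigSeries (fun k => (M k : ℂ)) s) t‖ ^ 2)
  simp_rw [norm_deriv_exp_mul_trigSeries hc hd]
  have hsum : HasSum (fun k : ℤ => M k ^ 2 / lorentzian a b k) ((1 / (2 * π)) *
      ∫ t in (-π)..π, ‖trigSeries (fun k => (M k : ℂ)) t‖ ^ 2 +
        b⁻¹ ^ 2 * ‖trigSeries (fun k => Complex.I * (k - a) * M k) t‖ ^ 2) := by
    convert (hasSum_norm_sq_trigSeries hc).add
      ((hasSum_norm_sq_trigSeries hd).mul_left (b⁻¹ ^ 2)) using 1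
    · funext k
      simp only [lorentzian, div_inv_eq_mul, norm_I_mul_sub_mul, Complex.norm_real,
        Real.norm_eq_abs, mul_pow, sq_abs]
      ring
    · rw [intervalIntegral.integral_add, intervalIntegral.integral_const_mul]
      · ring
      · exact ((continuous_trigSeries hc).norm.pow 2).intervalIntegrable _ _
      · exact (((continuous_trigSeries hd).norm.pow 2).const_mul _).intervalIntegrable _ _
  rw [← hsum.tsum_eq]
  exact tsum_abs_le_sqrt_mul_sqrt_of_sum_le (fun k => lorentzian_pos a b k)
    (sum_lorentzian_le a hb) hsum.summable
end
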